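/- For all a > 0 and x > 0, the integral over t in (0, ∞) of t·sin(a t) / (x² + t²) dt equals (π/2) · e^{-a x}. -/

import Mathlib

/-!
The Fourier transform of `e^{-2πx|s|}` is the Poisson kernel `x / (π (x² + ξ²))`, so Fourier
inversion gives `∫₀^∞ cos (b t) · x / (x² + t²) dt = (π/2) e^{-|b| x}`. Differentiating in `x`
under the integral sign yields `∫₀^∞ cos (a t) · (t² - x²) / (x² + t²)² dt = -(π/2) a e^{-a x}`.
Since `(x² - t²) / (x² + t²)²` is the derivative of `t / (x² + t²)`, integrating by parts on
`[0, R]` turns the conditionally convergent sine integral into this absolutely convergent one,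
plus a boundary term that vanishes as `R → ∞`.
-/

open Real MeasureTheory Filter Set

lemma integrable_exp_neg_mul_abs {c : ℝ} (hc : 0 < c) :
    Integrable (fun s : ℝ => Real.exp (-(c * |s|))) := by
  rw [← integrableOn_univ, ← Iic_union_Ioi (a := 0), integrableOn_union]
  constructor
  · refine (integrableOn_exp_mul_Iic hc 0).congr_fun (fun s hs => ?_) measurableSet_Iic
    simp [abs_of_nonpos (show s ≤ 0 from hs)]
  · refine (integrableOn_exp_mul_Ioi (neg_neg_of_pos hc) 0).congr_fun (fun s hs => ?_)
      measurableSet_Ioi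
    simp [abs_of_pos (show 0 < s from hs)]

lemma integrable_inv_sq_add_sq {x : ℝ} (hx : x ≠ 0) :
    Integrable (fun t : ℝ => (x ^ 2 + t ^ 2)⁻¹) := by
  refine ((integrable_inv_one_add_sq.comp_div hx).const_mul (x ^ 2)⁻¹).congr
    (Eventually.of_forall fun t => ?_)
  simp only
  field_simp

section Fourier

open Complex FourierTransform

theorem fourier_exp_neg_two_pi_mul_abs {x : ℝ} (hx : 0 < x) (ξ : ℝ) :
    𝓕 (fun s : ℝ => (Real.exp (-(2 * π * x * |s|)) : ℂ)) ξ = (x / (π * (x ^ 2 + ξ ^ 2)) : ℝ) := by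
  set z : ℂ := 2 * π * x + 2 * π * ξ * I
  set w : ℂ := 2 * π * x - 2 * π * ξ * I
  have hz : 0 < z.re := by simp [z]; positivity
  have hw : 0 < w.re := by simp [w]; positivity
  have hz' : (-z).re < 0 := by simpa using hz
  have hpos : EqOn (fun s : ℝ => cexp (↑(-2 * π * s * ξ) * I) • (Real.exp (-(2 * π * x * |s|)) : ℂ))
      (fun s : ℝ => cexp (-z * s)) (Ioi 0) := fun s hs => by
    simp only
    rw [abs_of_pos hs, smul_eq_mul, ofReal_exp, ← Complex.exp_add]
    simp only [z]; push_cast; ring_nf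
  have hneg : EqOn (fun s : ℝ => cexp (↑(-2 * π * s * ξ) * I) • (Real.exp (-(2 * π * x * |s|)) : ℂ))
      (fun s : ℝ => cexp (w * s)) (Iic 0) := fun s hs => by
    simp only
    rw [abs_of_nonpos hs, smul_eq_mul, ofReal_exp, ← Complex.exp_add]
    simp only [w]; push_cast; ring_nf
  rw [Real.fourier_real_eq_integral_exp_smul,
    ← intervalIntegral.integral_Iic_add_Ioi (b := 0)
      ((integrableOn_exp_mul_complex_Iic hw 0).congr_fun hneg.symm measurableSet_Iic)
      ((integrableOn_exp_mul_complex_Ioi hz' 0).congr_fun hpos.symm measurableSet_Ioi),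
    setIntegral_congr_fun measurableSet_Iic hneg, setIntegral_congr_fun measurableSet_Ioi hpos,
    integral_exp_mul_complex_Iic hw, integral_exp_mul_complex_Ioi hz']
  have hz0 : z ≠ 0 := fun h => by simp [h] at hz
  have hw0 : w ≠ 0 := fun h => by simp [h] at hw
  have hsum : w + z = 4 * π * x := by simp only [z, w]; ring
  have hprod : w * z = 4 * π ^ 2 * (x ^ 2 + ξ ^ 2) := by
    simp only [z, w]; ring_nf; rw [I_sq]; ring
  simp only [ofReal_zero, mul_zero, Complex.exp_zero, neg_div_neg_eq]
  rw [one_div_add_one_div hw0 hz0, hsum, hprod]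
  push_cast
  field_simp

theorem integral_cos_mul_div_sq_add_sq {x : ℝ} (hx : 0 < x) (b : ℝ) :
    ∫ t, Real.cos (b * t) * (x / (x ^ 2 + t ^ 2)) = π * Real.exp (-(|b| * x)) := by
  set f : ℝ → ℂ := fun s => (Real.exp (-(2 * π * x * |s|)) : ℂ)
  set P : ℝ → ℝ := fun ξ => x / (π * (x ^ 2 + ξ ^ 2))
  have hP : Integrable P := ((integrable_inv_sq_add_sq hx.ne').const_mul (x / π)).congr
    (Eventually.of_forall fun t => by simp only [P]; field_simp)
  have hf : Integrable f := (integrable_exp_neg_mul_abs (by positivity)).ofReal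
  have hFf : 𝓕 f = fun ξ => (P ξ : ℂ) := funext (fourier_exp_neg_two_pi_mul_abs hx)
  have hinv := congr_fun ((show Continuous f by fun_prop).fourierInv_fourier_eq hf
    (hFf ▸ hP.ofReal)) (b / (2 * π))
  have hphase : ∀ v : ℝ, 2 * π * inner ℝ v (b / (2 * π)) = b * v := fun v => by
    simp only [RCLike.inner_apply, conj_trivial]
    field_simp
  simp only [fourierInv_eq', hFf, hphase] at hinv
  have hint : Integrable fun v : ℝ => cexp (↑(b * v) * I) • (P v : ℂ) := by
    refine (hP.ofReal (𝕜 := ℂ)).mono (by fun_prop) (Eventually.of_forall fun v => ?_)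
    rw [norm_smul, Complex.norm_exp_ofReal_mul_I, one_mul]
    exact le_rfl
  calc ∫ t, Real.cos (b * t) * (x / (x ^ 2 + t ^ 2))
      = π * ∫ v : ℝ, RCLike.re (cexp (↑(b * v) * I) • (P v : ℂ)) := by
        rw [← MeasureTheory.integral_const_mul]
        congr 1 with v
        simp only [smul_eq_mul, RCLike.re_to_complex, mul_comm _ (P v : ℂ), re_ofReal_mul,
          exp_ofReal_mul_I_re, P]
        field_simp
    _ = π * Real.exp (-(|b| * x)) := by
        rw [integral_re hint, hinv]
        simp only [f, RCLike.re_to_complex, ofReal_re, abs_div, abs_of_pos two_pi_pos]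
        field_simp

end Fourier

theorem integral_Ioi_cos_mul_div_sq_add_sq {x : ℝ} (hx : 0 < x) (b : ℝ) :
    ∫ t in Ioi 0, Real.cos (b * t) * (x / (x ^ 2 + t ^ 2)) = π / 2 * Real.exp (-(|b| * x)) := by
  have heven : ∀ t : ℝ, Real.cos (b * |t|) = Real.cos (b * t) := fun t => by
    rcases abs_choice t with h | h <;> simp [h]
  have h := integral_comp_abs (f := fun t => Real.cos (b * t) * (x / (x ^ 2 + t ^ 2)))
  simp only [heven, sq_abs, integral_cos_mul_div_sq_add_sq hx] at h
  linarith

lemma hasDerivAt_div_sq_add_sq {c s : ℝ} (h : s ^ 2 + c ^ 2 ≠ 0) :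
    HasDerivAt (fun s => s / (s ^ 2 + c ^ 2)) ((c ^ 2 - s ^ 2) / (s ^ 2 + c ^ 2) ^ 2) s := by
  refine ((hasDerivAt_id' s).div ((hasDerivAt_pow 2 s).add_const (c ^ 2)) h).congr_deriv ?_
  norm_num
  ring

lemma norm_cos_mul_sq_sub_sq_div_le (b y t : ℝ) :
    ‖Real.cos (b * t) * ((t ^ 2 - y ^ 2) / (y ^ 2 + t ^ 2) ^ 2)‖ ≤ (y ^ 2 + t ^ 2)⁻¹ := by
  rw [norm_mul, Real.norm_eq_abs, Real.norm_eq_abs]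
  refine (mul_le_of_le_one_left (abs_nonneg _) (abs_cos_le_one _)).trans ?_
  rcases (add_nonneg (sq_nonneg y) (sq_nonneg t)).eq_or_lt with h | h
  · simp [← h]
  rw [abs_div, abs_of_pos (pow_pos h 2), div_le_iff₀ (pow_pos h 2),
    show (y ^ 2 + t ^ 2)⁻¹ * (y ^ 2 + t ^ 2) ^ 2 = y ^ 2 + t ^ 2 by field_simp, abs_le]
  constructor <;> nlinarith [sq_nonneg y, sq_nonneg t]

lemma hasDerivAt_integral_Ioi_cos_mul_div_sq_add_sq {x : ℝ} (hx : 0 < x) (b : ℝ) :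
    HasDerivAt (fun y => ∫ t in Ioi 0, Real.cos (b * t) * (y / (y ^ 2 + t ^ 2)))
      (∫ t in Ioi 0, Real.cos (b * t) * ((t ^ 2 - x ^ 2) / (x ^ 2 + t ^ 2) ^ 2)) x := by
  have hball : Metric.ball x (x / 2) ∈ nhds x := Metric.ball_mem_nhds x (by positivity)
  have hpos : ∀ y ∈ Metric.ball x (x / 2), x / 2 < y := fun y hy => by
    rw [Metric.mem_ball, Real.dist_eq, abs_lt] at hy; linarith
  refine (hasDerivAt_integral_of_dominated_loc_of_deriv_le (μ := volume.restrict (Ioi 0))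
    (F := fun y t => Real.cos (b * t) * (y / (y ^ 2 + t ^ 2)))
    (F' := fun y t => Real.cos (b * t) * ((t ^ 2 - y ^ 2) / (y ^ 2 + t ^ 2) ^ 2)) hball
    (Eventually.of_forall fun y => (by fun_prop : Measurable _).aestronglyMeasurable)
    ?_ (by fun_prop : Measurable fun t : ℝ =>
      Real.cos (b * t) * ((t ^ 2 - x ^ 2) / (x ^ 2 + t ^ 2) ^ 2)).aestronglyMeasurable
    (Eventually.of_forall fun t y hy => ?_)
    (integrable_inv_sq_add_sq (by positivity : x / 2 ≠ 0)).integrableOn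
    (Eventually.of_forall fun t y hy => ?_)).2
  · refine (((integrable_inv_sq_add_sq hx.ne').const_mul x).integrableOn.bdd_mul (c := 1)
      (by fun_prop : Measurable fun t : ℝ => Real.cos (b * t)).aestronglyMeasurable
      (Eventually.of_forall fun t => ?_)).congr (Eventually.of_forall fun t => ?_)
    · exact (Real.norm_eq_abs _).trans_le (abs_cos_le_one _)
    · simp only [div_eq_mul_inv]
  · refine (norm_cos_mul_sq_sub_sq_div_le b y t).trans ?_
    have := hpos y hy
    gcongr
  · have hy : 0 < y := by linarith [hpos y hy]
    exact (hasDerivAt_div_sq_add_sq (by positivity)).const_mul _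

theorem integral_Ioi_cos_mul_sq_sub_sq_div {x : ℝ} (hx : 0 < x) (b : ℝ) :
    ∫ t in Ioi 0, Real.cos (b * t) * ((t ^ 2 - x ^ 2) / (x ^ 2 + t ^ 2) ^ 2)
      = -(π / 2 * |b| * Real.exp (-(|b| * x))) := by
  have hexp : HasDerivAt (fun y => π / 2 * Real.exp (-(|b| * y)))
      (-(π / 2 * |b| * Real.exp (-(|b| * x)))) x := by
    have hlin : HasDerivAt (fun y => -(|b| * y)) (-(|b| * 1)) x :=
      ((hasDerivAt_id' x).const_mul |b|).neg
    exact (hlin.exp.const_mul (π / 2)).congr_deriv (by ring)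
  refine (hasDerivAt_integral_Ioi_cos_mul_div_sq_add_sq hx b).unique
    (hexp.congr_of_eventuallyEq ?_)
  filter_upwards [Ioi_mem_nhds hx] with y hy
  exact integral_Ioi_cos_mul_div_sq_add_sq hy b

lemma integrableOn_cos_mul_sq_sub_sq_div {x : ℝ} (hx : x ≠ 0) (b : ℝ) :
    IntegrableOn (fun t => Real.cos (b * t) * ((t ^ 2 - x ^ 2) / (x ^ 2 + t ^ 2) ^ 2)) (Ioi 0) :=
  (integrable_inv_sq_add_sq hx).integrableOn.mono' (by fun_prop : Measurable _).aestronglyMeasurable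
    (Eventually.of_forall (norm_cos_mul_sq_sub_sq_div_le b x))

lemma tendsto_cos_mul_div_sq_add_sq_atTop (a x : ℝ) :
    Tendsto (fun R => Real.cos (a * R) * (R / (R ^ 2 + x ^ 2))) atTop (nhds 0) := by
  refine squeeze_zero_norm' ?_ tendsto_inv_atTop_zero
  filter_upwards [eventually_gt_atTop 0] with R hR
  rw [norm_mul, Real.norm_eq_abs, Real.norm_eq_abs,
    abs_of_pos (by positivity : 0 < R / (R ^ 2 + x ^ 2))]
  refine (mul_le_of_le_one_left (by positivity) (abs_cos_le_one _)).trans ?_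
  rw [div_le_iff₀ (by positivity)]
  field_simp
  nlinarith [sq_nonneg x]

lemma integral_mul_sin_div_sq_add_sq {a x : ℝ} (ha : a ≠ 0) (hx : x ≠ 0) (R : ℝ) :
    ∫ t in (0 : ℝ)..R, t * Real.sin (a * t) / (x ^ 2 + t ^ 2)
      = -(Real.cos (a * R) * (R / (R ^ 2 + x ^ 2)) / a)
        - a⁻¹ * ∫ t in (0 : ℝ)..R, Real.cos (a * t) * ((t ^ 2 - x ^ 2) / (x ^ 2 + t ^ 2) ^ 2) := by
  have hu : ∀ t ∈ uIcc 0 R, HasDerivAt (fun t => t / (t ^ 2 + x ^ 2))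
      ((x ^ 2 - t ^ 2) / (t ^ 2 + x ^ 2) ^ 2) t :=
    fun t _ => hasDerivAt_div_sq_add_sq (by positivity)
  have hv : ∀ t ∈ uIcc 0 R, HasDerivAt (fun t => -(Real.cos (a * t) / a)) (Real.sin (a * t)) t :=
    fun t _ => by
      refine (((hasDerivAt_id' t).const_mul a).cos.div_const a).neg.congr_deriv ?_
      field_simp
  have h := intervalIntegral.integral_mul_deriv_eq_deriv_mul hu hv
    ((Continuous.div (by fun_prop) (by fun_prop) fun t => by positivity).intervalIntegrable _ _)
    ((by fun_prop : Continuous fun t => Real.sin (a * t)).intervalIntegrable _ _)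
  rw [intervalIntegral.integral_congr (g := fun t => t / (t ^ 2 + x ^ 2) * Real.sin (a * t))
    fun t _ => by ring, h, ← intervalIntegral.integral_const_mul]
  congr 1
  · simp only [mul_zero, Real.cos_zero, zero_div, zero_mul, sub_zero]
    ring
  · exact intervalIntegral.integral_congr fun t _ => by ring

theorem t_sin_integral (a x : ℝ) (ha : 0 < a) (hx : 0 < x) :
    Tendsto (fun R : ℝ => ∫ t in (0:ℝ)..R, t * Real.sin (a * t) / (x ^ 2 + t ^ 2))
      atTop (nhds ((Real.pi / 2) * Real.exp (-a * x))) := by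
  have hlim := intervalIntegral_tendsto_integral_Ioi (b := fun R => R) 0
    (integrableOn_cos_mul_sq_sub_sq_div hx.ne' a) tendsto_id
  rw [integral_Ioi_cos_mul_sq_sub_sq_div hx a, abs_of_pos ha] at hlim
  simp_rw [integral_mul_sin_div_sq_add_sq ha.ne' hx.ne']
  convert ((tendsto_cos_mul_div_sq_add_sq_atTop a x).div_const a).neg.sub
    (hlim.const_mul a⁻¹) using 2
  field_simp
  ring
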